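/- Let n ≥ 1 and let (p_β)_{β∈ℤ²} ⊂ M_n(ℂ) (independent of γ) satisfy: for every N ∈ ℕ there is C_N > 0 with ‖p_β‖ ≤ C_N(1+|β₁|+|β₂|)^{−N}, and p_{−β} = p_β* for all β. If p_β = 0 whenever β₁ and β₂ are both odd, then for every γ ∈ ℝ∖{0} with γ+2π ≠ 0, σ(P_{γ+2π}) = σ(P_γ). -/

import Mathlib

/- STATEMENT 2: if the coefficients `p_β` vanish whenever `β₁` and `β₂` are both odd, then
`σ(P_{γ+2π}) = σ(P_γ)`. -/

open Complex Matrix MeasureTheory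

attribute [local instance] Matrix.normedAddCommGroup

noncomputable section

/-- `L²(ℝ;ℂⁿ)`. -/
abbrev L2Rn (n : ℕ) : Type :=
  MeasureTheory.Lp (EuclideanSpace ℂ (Fin n)) 2 (volume : Measure ℝ)

/-- `P_γ` is the operator `(P_γ u)(x) = Σ_β p_β e^{iγβ₁β₂/2} e^{iβ₁x} u(x+β₂γ)` on `L²(ℝ;ℂⁿ)`. -/
def IsPgamma (n : ℕ) (p : ℤ × ℤ → Matrix (Fin n) (Fin n) ℂ) (γ : ℝ)
    (P : L2Rn n →L[ℂ] L2Rn n) : Prop :=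
  ∀ u : L2Rn n, ∀ᵐ x ∂(volume : Measure ℝ), ∀ j : Fin n,
    (P u) x j = ∑' β : ℤ × ℤ,
      Complex.exp (Complex.I * (γ : ℂ) * ((β.1 * β.2 : ℤ) : ℂ) / 2) *
        Complex.exp (Complex.I * (β.1 : ℂ) * (x : ℂ)) *
        ∑ k : Fin n, p β j k * u (x + (β.2 : ℝ) * γ) k

/-!
Replacing `γ` by `γ' = γ + 2π` multiplies the phase `e^{iγβ₁β₂/2}` by `(-1)^{β₁β₂}`, which is `1`
whenever `p_β ≠ 0`, and the factor `e^{iβ₁x}` does not see translations by `2πℤ`. Cut `ℝ` into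
windows `[s + kγ, s + kγ + l)` with `l ≤ min |γ| |γ'|` and move the `k`-th of them onto
`[s + kγ', s + kγ' + l)`, a translation by `2πk`: this gives partial isometries `J` with
`P_γ J = J P_γ'` and, in the reverse direction, `K` with `P_γ' K = K P_γ`. Finitely many offsets
`s = jδ` tile a period of `γ'`, so `∑ K_j J_j = 1` and `∑ K_j (z - P_γ)⁻¹ J_j` inverts `z - P_γ'`.
-/

open Set
open scoped ENNReal

lemma IsUnit.of_sum_mul_intertwining {A ι : Type*} [Ring A] {x y : A} (hy : IsUnit y)
    (s : Finset ι) (J K : ι → A) (hJ : ∀ i ∈ s, y * J i = J i * x)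
    (hK : ∀ i ∈ s, x * K i = K i * y) (hKJ : ∑ i ∈ s, K i * J i = 1) : IsUnit x := by
  obtain ⟨y, rfl⟩ := hy
  refine isUnit_iff_exists.2 ⟨∑ i ∈ s, K i * ↑y⁻¹ * J i, ?_, ?_⟩
  · rw [Finset.mul_sum, ← hKJ]
    refine Finset.sum_congr rfl fun i hi => ?_
    rw [← mul_assoc, ← mul_assoc, hK i hi, mul_assoc (K i), Units.mul_inv, mul_one]
  · rw [Finset.sum_mul, ← hKJ]
    refine Finset.sum_congr rfl fun i hi => ?_
    rw [mul_assoc, ← hJ i hi, ← mul_assoc, mul_assoc (K i), Units.inv_mul, mul_one]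

lemma spectrum_subset_of_sum_mul_intertwining {R A ι : Type*} [CommSemiring R] [Ring A]
    [Algebra R A] {a b : A} (s : Finset ι) (J K : ι → A) (hJ : ∀ i ∈ s, a * J i = J i * b)
    (hK : ∀ i ∈ s, b * K i = K i * a) (hKJ : ∑ i ∈ s, K i * J i = 1) :
    spectrum R b ⊆ spectrum R a := by
  intro z hz
  contrapose! hz
  rw [spectrum.notMem_iff] at hz ⊢
  refine hz.of_sum_mul_intertwining s J K (fun i hi => ?_) (fun i hi => ?_) hKJ
  · rw [sub_mul, mul_sub, hJ i hi, Algebra.commutes]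
  · rw [sub_mul, mul_sub, hK i hi, Algebra.commutes]

section Windows

def windowIndex (c y : ℝ) : ℤ := if 0 < c then ⌊y / c⌋ else ⌈y / c⌉

lemma sub_windowIndex_mul_mem_Ico {c : ℝ} (hc : c ≠ 0) (y : ℝ) :
    y - windowIndex c y * c ∈ Ico 0 |c| := by
  unfold windowIndex
  rcases hc.lt_or_gt with hneg | hpos
  · rw [if_neg hneg.not_gt, abs_of_neg hneg]
    have h₁ := (div_le_iff_of_neg hneg).1 (Int.le_ceil (y / c))
    have h₂ := (lt_div_iff_of_neg hneg).1 (sub_lt_iff_lt_add.2 (Int.ceil_lt_add_one (y / c)))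
    constructor <;> nlinarith
  · rw [if_pos hpos, abs_of_pos hpos]
    have h₁ := (le_div_iff₀ hpos).1 (Int.floor_le (y / c))
    have h₂ := (div_lt_iff₀ hpos).1 (Int.lt_floor_add_one (y / c))
    constructor <;> nlinarith

lemma int_eq_of_sub_mul_mem_Ico {c y : ℝ} {k k' : ℤ} (hk : y - k * c ∈ Ico 0 |c|)
    (hk' : y - k' * c ∈ Ico 0 |c|) : k = k' := by
  have hc : 0 < |c| := hk.1.trans_lt hk.2
  have hlt : |((k - k' : ℤ) : ℝ)| * |c| < 1 * |c| := by
    rw [← abs_mul, one_mul, abs_lt]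
    push_cast
    constructor <;> linarith [hk.1, hk.2, hk'.1, hk'.2]
  have hlt' : |k - k'| < 1 := by exact_mod_cast lt_of_mul_lt_mul_right hlt hc.le
  exact sub_eq_zero.1 (Int.abs_lt_one_iff.1 hlt')

lemma windowIndex_eq {c y : ℝ} {k : ℤ} (hk : y - k * c ∈ Ico 0 |c|) : windowIndex c y = k :=
  int_eq_of_sub_mul_mem_Ico (sub_windowIndex_mul_mem_Ico (abs_pos.1 (hk.1.trans_lt hk.2)) y) hk

@[fun_prop]
lemma measurable_windowIndex (c : ℝ) : Measurable (windowIndex c) := by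
  unfold windowIndex
  split
  · exact (measurable_id.div_const c).floor
  · exact (measurable_id.div_const c).ceil

def windows (s l c : ℝ) : Set ℝ := ⋃ k : ℤ, {x | x - s - k * c ∈ Ico 0 l}

variable {s l c d x : ℝ}

lemma mem_windows_iff : x ∈ windows s l c ↔ ∃ k : ℤ, x - s - k * c ∈ Ico 0 l :=
  mem_iUnion

lemma measurableSet_windows (s l c : ℝ) : MeasurableSet (windows s l c) :=
  MeasurableSet.iUnion fun _ => measurableSet_Ico.preimage (by fun_prop)

lemma windowIndex_eq_of_mem_Ico (hlc : l ≤ |c|) {k : ℤ} (hk : x - s - k * c ∈ Ico 0 l) :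
    windowIndex c (x - s) = k :=
  windowIndex_eq ⟨hk.1, hk.2.trans_le hlc⟩

lemma pairwise_disjoint_windows (hlc : l ≤ |c|) :
    Pairwise (Function.onFun Disjoint fun k : ℤ => {x | x - s - k * c ∈ Ico 0 l}) :=
  fun _ _ hkk' => Set.disjoint_left.2 fun _ hk hk' =>
    hkk' ((windowIndex_eq_of_mem_Ico hlc hk).symm.trans (windowIndex_eq_of_mem_Ico hlc hk'))

lemma add_int_mul_mem_windows_iff (k : ℤ) : x + k * c ∈ windows s l c ↔ x ∈ windows s l c := by
  simp only [mem_windows_iff]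
  constructor
  · rintro ⟨k', hk'⟩
    exact ⟨k' - k, by push_cast; convert hk' using 1; ring⟩
  · rintro ⟨k', hk'⟩
    exact ⟨k' + k, by push_cast; convert hk' using 1; ring⟩

lemma mem_windows_nat_mul_iff {b δ : ℝ} {N j : ℕ} (hNδ : N * δ = |b|) (hδ : 0 < δ) (hj : j < N)
    (x : ℝ) : x ∈ windows (j * δ) δ b ↔ ⌊(x - windowIndex b x * b) / δ⌋₊ = j := by
  have hjN : (j : ℝ) + 1 ≤ N := by exact_mod_cast hj
  have hjδ : (j + 1) * δ ≤ |b| := hNδ ▸ mul_le_mul_of_nonneg_right hjN hδ.le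
  have hb : b ≠ 0 := abs_pos.1 (by nlinarith)
  have hθ := sub_windowIndex_mul_mem_Ico hb x
  rw [mem_windows_iff, Nat.floor_eq_iff (div_nonneg hθ.1 hδ.le), le_div_iff₀ hδ, div_lt_iff₀ hδ]
  constructor
  · rintro ⟨k, hk⟩
    have hkx : windowIndex b x = k := windowIndex_eq ⟨by nlinarith [hk.1], by nlinarith [hk.2]⟩
    subst hkx
    constructor <;> linarith [hk.1, hk.2]
  · rintro ⟨h₁, h₂⟩
    exact ⟨windowIndex b x, by linarith, by linarith⟩

lemma sum_indicator_windows_nat_mul {M : Type*} [AddCommMonoid M] {b δ : ℝ} {N : ℕ} (hb : b ≠ 0)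
    (hNδ : N * δ = |b|) (hδ : 0 < δ) (f : ℝ → M) (x : ℝ) :
    ∑ j ∈ Finset.range N, (windows (j * δ) δ b).indicator f x = f x := by
  have hθ := sub_windowIndex_mul_mem_Ico hb x
  have hmem : ⌊(x - windowIndex b x * b) / δ⌋₊ ∈ Finset.range N := by
    rw [Finset.mem_range, Nat.floor_lt (div_nonneg hθ.1 hδ.le), div_lt_iff₀ hδ, hNδ]
    exact hθ.2
  rw [Finset.sum_eq_single_of_mem _ hmem fun j hj hne => indicator_of_notMem
      (mt (mem_windows_nat_mul_iff hNδ hδ (Finset.mem_range.1 hj) x).1 (Ne.symm hne)) _,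
    indicator_of_mem ((mem_windows_nat_mul_iff hNδ hδ (Finset.mem_range.1 hmem) x).2 rfl)]

end Windows

section Transplant

variable {E : Type*} [NormedAddCommGroup E] {s l c d x : ℝ}

def transplant (s l c d : ℝ) (u : ℝ → E) : ℝ → E :=
  (windows s l c).indicator fun x => u (x + (d - c) * windowIndex c (x - s))

lemma transplant_of_mem_Ico (hlc : l ≤ |c|) (u : ℝ → E) {k : ℤ} (hk : x - s - k * c ∈ Ico 0 l) :
    transplant s l c d u x = u (x + (d - c) * k) := by
  rw [transplant, indicator_of_mem (mem_windows_iff.2 ⟨k, hk⟩), windowIndex_eq_of_mem_Ico hlc hk]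

lemma transplant_of_notMem (u : ℝ → E) (hx : x ∉ windows s l c) : transplant s l c d u x = 0 :=
  indicator_of_notMem hx _

lemma transplant_self (u : ℝ → E) : transplant s l c c u = (windows s l c).indicator u := by
  simp [transplant]

lemma transplant_transplant (hlc : l ≤ |c|) (hld : l ≤ |d|) (u : ℝ → E) :
    transplant s l c d (transplant s l d c u) = transplant s l c c u := by
  funext x
  by_cases hx : x ∈ windows s l c
  · obtain ⟨k, hk⟩ := mem_windows_iff.1 hx
    have hk' : x + (d - c) * k - s - k * d ∈ Ico 0 l := by convert hk using 1; ring
    rw [transplant_of_mem_Ico hlc _ hk, transplant_of_mem_Ico hld _ hk',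
      transplant_of_mem_Ico hlc _ hk]
    congr 1
    ring
  · rw [transplant_of_notMem _ hx, transplant_of_notMem _ hx]

@[fun_prop]
lemma measurable_add_mul_windowIndex (c s e : ℝ) :
    Measurable fun x => x + e * windowIndex c (x - s) := by
  fun_prop

lemma quasiMeasurePreserving_add_mul_windowIndex (c s e : ℝ) :
    Measure.QuasiMeasurePreserving (fun x => x + e * windowIndex c (x - s)) volume volume := by
  refine ⟨measurable_add_mul_windowIndex c s e, Measure.AbsolutelyContinuous.mk fun N hN hN0 => ?_⟩
  rw [Measure.map_apply (measurable_add_mul_windowIndex c s e) hN]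
  refine measure_mono_null (t := ⋃ k : ℤ, (· + e * k) ⁻¹' N)
    (fun x hx => mem_iUnion.2 ⟨_, hx⟩) (measure_iUnion_null fun k => ?_)
  exact (measurePreserving_add_right volume (e * k)).quasiMeasurePreserving.preimage_null hN0

lemma transplant_congr_ae {u v : ℝ → E} (h : u =ᵐ[volume] v) :
    transplant s l c d u =ᵐ[volume] transplant s l c d v := by
  filter_upwards [(quasiMeasurePreserving_add_mul_windowIndex c s (d - c)).ae_eq h] with x hx
  simp only [transplant, indicator, Function.comp_apply] at hx ⊢
  rw [hx]

lemma stronglyMeasurable_transplant {u : ℝ → E} (hu : StronglyMeasurable u) :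
    StronglyMeasurable (transplant s l c d u) :=
  (hu.comp_measurable (measurable_add_mul_windowIndex c s (d - c))).indicator
    (measurableSet_windows s l c)

lemma setLIntegral_windows_transplant (hlc : l ≤ |c|) (hld : l ≤ |d|) {F : ℝ → ℝ≥0∞}
    (hF : Measurable F) :
    ∫⁻ x in windows s l c, F (x + (d - c) * windowIndex c (x - s)) =
      ∫⁻ x in windows s l d, F x := by
  have hmeas : ∀ (e : ℝ) (k : ℤ), MeasurableSet {x : ℝ | x - s - k * e ∈ Ico 0 l} :=
    fun _ _ => measurableSet_Ico.preimage (by fun_prop)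
  rw [windows, windows, lintegral_iUnion (hmeas c) (pairwise_disjoint_windows hlc),
    lintegral_iUnion (hmeas d) (pairwise_disjoint_windows hld)]
  refine tsum_congr fun k => ?_
  have hpre : {x : ℝ | x - s - k * c ∈ Ico 0 l} =
      (· + (d - c) * k) ⁻¹' {x : ℝ | x - s - k * d ∈ Ico 0 l} := by
    ext x
    simp only [mem_preimage, mem_ofPred_eq]
    ring_nf
  calc ∫⁻ x in {x | x - s - k * c ∈ Ico 0 l}, F (x + (d - c) * windowIndex c (x - s))
      = ∫⁻ x in {x | x - s - k * c ∈ Ico 0 l}, F (x + (d - c) * k) :=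
        setLIntegral_congr_fun (hmeas c k) fun x hx => by rw [windowIndex_eq_of_mem_Ico hlc hx]
    _ = ∫⁻ x in {x | x - s - k * d ∈ Ico 0 l}, F x := by
        rw [hpre]
        exact (measurePreserving_add_right volume _).setLIntegral_comp_preimage (hmeas d k) hF

lemma eLpNorm_transplant_le (hlc : l ≤ |c|) (hld : l ≤ |d|) {u : ℝ → E}
    (hu : StronglyMeasurable u) :
    eLpNorm (transplant s l c d u) 2 volume ≤ eLpNorm u 2 volume := by
  simp only [eLpNorm_eq_lintegral_rpow_enorm_toReal two_ne_zero ENNReal.ofNat_ne_top,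
    ENNReal.toReal_ofNat]
  refine ENNReal.rpow_le_rpow ?_ (by norm_num)
  have hF : Measurable fun x => ‖u x‖ₑ ^ (2 : ℝ) := by fun_prop
  calc ∫⁻ x, ‖transplant s l c d u x‖ₑ ^ (2 : ℝ)
      = ∫⁻ x in windows s l c, ‖u (x + (d - c) * windowIndex c (x - s))‖ₑ ^ (2 : ℝ) := by
        rw [← lintegral_indicator (measurableSet_windows s l c)]
        congr 1 with x
        by_cases hx : x ∈ windows s l c <;> simp [transplant, hx]
    _ = ∫⁻ x in windows s l d, ‖u x‖ₑ ^ (2 : ℝ) := setLIntegral_windows_transplant hlc hld hF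
    _ ≤ ∫⁻ x, ‖u x‖ₑ ^ (2 : ℝ) := setLIntegral_le_lintegral _ _

lemma memLp_transplant (hlc : l ≤ |c|) (hld : l ≤ |d|) {u : ℝ → E} (hu : StronglyMeasurable u)
    (hu₂ : MemLp u 2 volume) : MemLp (transplant s l c d u) 2 volume :=
  ⟨(stronglyMeasurable_transplant hu).aestronglyMeasurable,
    (eLpNorm_transplant_le hlc hld hu).trans_lt hu₂.2⟩

end Transplant

section TransplantL

variable {E : Type*} [NormedAddCommGroup E] [NormedSpace ℂ E] {s l c d : ℝ}

def transplantL (s l c d : ℝ) (hlc : l ≤ |c|) (hld : l ≤ |d|) :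
    Lp E 2 (volume : Measure ℝ) →L[ℂ] Lp E 2 (volume : Measure ℝ) :=
  LinearMap.mkContinuous
    { toFun := fun u =>
        (memLp_transplant hlc hld (Lp.stronglyMeasurable u) (Lp.memLp u)).toLp
          (transplant s l c d u)
      map_add' := fun u v => by
        rw [← MemLp.toLp_add, MemLp.toLp_eq_toLp_iff]
        refine (transplant_congr_ae (Lp.coeFn_add u v)).trans (.of_forall fun x => ?_)
        by_cases hx : x ∈ windows s l c <;> simp [transplant, hx]
      map_smul' := fun a u => by
        rw [RingHom.id_apply, ← MemLp.toLp_const_smul, MemLp.toLp_eq_toLp_iff]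
        refine (transplant_congr_ae (Lp.coeFn_smul a u)).trans (.of_forall fun x => ?_)
        by_cases hx : x ∈ windows s l c <;> simp [transplant, hx] }
    1 fun u => by
      rw [one_mul, LinearMap.coe_mk, AddHom.coe_mk, Lp.norm_toLp, Lp.norm_def]
      exact ENNReal.toReal_mono (Lp.eLpNorm_ne_top u)
        (eLpNorm_transplant_le hlc hld (Lp.stronglyMeasurable u))

lemma coeFn_transplantL (hlc : l ≤ |c|) (hld : l ≤ |d|) (u : Lp E 2 (volume : Measure ℝ)) :
    transplantL s l c d hlc hld u =ᵐ[volume] transplant s l c d u :=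
  MemLp.coeFn_toLp (f := transplant s l c d u)
    (memLp_transplant hlc hld (Lp.stronglyMeasurable u) (Lp.memLp u))

lemma transplantL_comp_transplantL (hlc : l ≤ |c|) (hld : l ≤ |d|) :
    (transplantL s l c d hlc hld : Lp E 2 (volume : Measure ℝ) →L[ℂ] _).comp
      (transplantL s l d c hld hlc) = transplantL s l c c hlc hlc := by
  ext1 u
  refine Lp.ext ?_
  filter_upwards [coeFn_transplantL hlc hld (transplantL s l d c hld hlc u),
    transplant_congr_ae (s := s) (l := l) (c := c) (d := d) (coeFn_transplantL hld hlc u),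
    coeFn_transplantL hlc hlc u] with x h₁ h₂ h₃
  rw [ContinuousLinearMap.comp_apply, h₁, h₂, h₃, transplant_transplant hlc hld]

lemma sum_transplantL_self {b δ : ℝ} {N : ℕ} (hb : b ≠ 0) (hNδ : N * δ = |b|) (hδ : 0 < δ)
    (hδb : δ ≤ |b|) :
    ∑ j ∈ Finset.range N,
      (transplantL (j * δ) δ b b hδb hδb : Lp E 2 (volume : Measure ℝ) →L[ℂ] _) = 1 := by
  ext1 u
  refine Lp.ext ?_
  have hj : ∀ᵐ x ∂volume, ∀ j : ℕ, transplantL (j * δ) δ b b hδb hδb u x =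
      (windows (j * δ) δ b).indicator u x :=
    ae_all_iff.2 fun j => (coeFn_transplantL hδb hδb u).mono fun x hx => by
      rw [hx, transplant_self]
  filter_upwards [Lp.coeFn_fun_finsetSum (Finset.range N)
    fun j => transplantL (j * δ) δ b b hδb hδb u, hj] with x hsum hj
  rw [one_apply_eq_self, _root_.sum_apply, hsum]
  simp only [hj, sum_indicator_windows_nat_mul hb hNδ hδ]

end TransplantL

section Intertwining

variable {n : ℕ} {p : ℤ × ℤ → Matrix (Fin n) (Fin n) ℂ}

def weylTerm (n : ℕ) (p : ℤ × ℤ → Matrix (Fin n) (Fin n) ℂ) (γ : ℝ)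
    (u : ℝ → EuclideanSpace ℂ (Fin n)) (x : ℝ) (j : Fin n) (β : ℤ × ℤ) : ℂ :=
  Complex.exp (Complex.I * (γ : ℂ) * ((β.1 * β.2 : ℤ) : ℂ) / 2) *
    Complex.exp (Complex.I * (β.1 : ℂ) * (x : ℂ)) *
    ∑ k : Fin n, p β j k * u (x + (β.2 : ℝ) * γ) k

lemma isPgamma_iff {γ : ℝ} {P : L2Rn n →L[ℂ] L2Rn n} :
    IsPgamma n p γ P ↔ ∀ u : L2Rn n, ∀ᵐ x ∂volume, ∀ j, P u x j = ∑' β, weylTerm n p γ u x j β :=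
  Iff.rfl

variable {s l c d x : ℝ}

lemma weylTerm_transplant_of_mem_Ico (hodd : ∀ β : ℤ × ℤ, Odd β.1 → Odd β.2 → p β = 0)
    (hlc : l ≤ |c|) {m : ℤ} (hcd : d - c = 2 * Real.pi * m) (u : ℝ → EuclideanSpace ℂ (Fin n))
    {k : ℤ} (hk : x - s - k * c ∈ Ico 0 l) (j : Fin n) (β : ℤ × ℤ) :
    weylTerm n p c (transplant s l c d u) x j β = weylTerm n p d u (x + (d - c) * k) j β := by
  by_cases hp : p β = 0
  · simp [weylTerm, hp]
  obtain ⟨w, hw⟩ : Even (β.1 * β.2) := by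
    rcases Int.even_or_odd β.1 with h₁ | h₁
    · exact h₁.mul_right _
    rcases Int.even_or_odd β.2 with h₂ | h₂
    · exact h₂.mul_left _
    exact absurd (hodd β h₁ h₂) hp
  have hcdC : (d : ℂ) - c = 2 * Real.pi * m := by exact_mod_cast hcd
  -- `e^{iγβ₁β₂/2}` only sees `γ` modulo `2π` because `β₁β₂` is even
  have hphase : Complex.exp (Complex.I * (d : ℂ) * ((β.1 * β.2 : ℤ) : ℂ) / 2) =
      Complex.exp (Complex.I * (c : ℂ) * ((β.1 * β.2 : ℤ) : ℂ) / 2) := by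
    refine Complex.exp_eq_exp_iff_exists_int.2 ⟨m * w, ?_⟩
    rw [hw]
    push_cast
    linear_combination (Complex.I * w) * hcdC
  have hshift : Complex.exp (Complex.I * (β.1 : ℂ) * ((x + (d - c) * k : ℝ) : ℂ)) =
      Complex.exp (Complex.I * (β.1 : ℂ) * (x : ℂ)) := by
    refine Complex.exp_eq_exp_iff_exists_int.2 ⟨β.1 * m * k, ?_⟩
    push_cast
    linear_combination (Complex.I * β.1 * k) * hcdC
  have hk' : x + β.2 * c - s - ((k + β.2 : ℤ) : ℝ) * c ∈ Ico 0 l := by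
    convert hk using 1
    push_cast
    ring
  have harg : x + β.2 * c + (d - c) * ((k + β.2 : ℤ) : ℝ) = x + (d - c) * k + β.2 * d := by
    push_cast
    ring
  simp only [weylTerm, hphase, hshift, transplant_of_mem_Ico hlc u hk', harg]

lemma weylTerm_transplant_of_notMem (u : ℝ → EuclideanSpace ℂ (Fin n))
    (hx : x ∉ windows s l c) (j : Fin n) (β : ℤ × ℤ) :
    weylTerm n p c (transplant s l c d u) x j β = 0 := by
  have hxβ : x + β.2 * c ∉ windows s l c := (add_int_mul_mem_windows_iff β.2).not.2 hx
  simp [weylTerm, transplant_of_notMem u hxβ]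

lemma IsPgamma.comp_transplantL (hodd : ∀ β : ℤ × ℤ, Odd β.1 → Odd β.2 → p β = 0)
    {Pc Pd : L2Rn n →L[ℂ] L2Rn n} (hPc : IsPgamma n p c Pc) (hPd : IsPgamma n p d Pd)
    {m : ℤ} (hcd : d - c = 2 * Real.pi * m) (hlc : l ≤ |c|) (hld : l ≤ |d|) :
    Pc.comp (transplantL s l c d hlc hld) = (transplantL s l c d hlc hld).comp Pd := by
  ext1 u
  refine Lp.ext ?_
  set S := transplantL (E := EuclideanSpace ℂ (Fin n)) s l c d hlc hld
  have hSu : ∀ᵐ x ∂volume, ∀ β : ℤ × ℤ,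
      S u (x + β.2 * c) = transplant s l c d u (x + β.2 * c) :=
    ae_all_iff.2 fun β => (measurePreserving_add_right volume (β.2 * c)).quasiMeasurePreserving.ae
      (coeFn_transplantL hlc hld u)
  filter_upwards [isPgamma_iff.1 hPc (S u), hSu,
    (quasiMeasurePreserving_add_mul_windowIndex c s (d - c)).ae (isPgamma_iff.1 hPd u),
    coeFn_transplantL hlc hld (Pd u)] with x hPcx hSux hPdx hSPx
  refine PiLp.ext fun j => ?_
  have hterm : ∀ β, weylTerm n p c (S u) x j β = weylTerm n p c (transplant s l c d u) x j β :=
    fun β => by simp only [weylTerm, hSux β]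
  rw [ContinuousLinearMap.comp_apply, ContinuousLinearMap.comp_apply, hPcx j, hSPx,
    tsum_congr hterm]
  by_cases hx : x ∈ windows s l c
  · obtain ⟨k, hk⟩ := mem_windows_iff.1 hx
    rw [transplant_of_mem_Ico hlc _ hk,
      tsum_congr (weylTerm_transplant_of_mem_Ico hodd hlc hcd u hk j)]
    simp only [windowIndex_eq_of_mem_Ico hlc hk] at hPdx
    exact (hPdx j).symm
  · rw [transplant_of_notMem _ hx, tsum_congr (weylTerm_transplant_of_notMem u hx j), tsum_zero]
    rfl

end Intertwining

lemma exists_window_length {a b : ℝ} (ha : a ≠ 0) (hb : b ≠ 0) :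
    ∃ δ : ℝ, ∃ N : ℕ, 0 < δ ∧ δ ≤ |a| ∧ δ ≤ |b| ∧ N * δ = |b| := by
  have hba : 0 < |b| / |a| := div_pos (abs_pos.2 hb) (abs_pos.2 ha)
  have hN : (0 : ℝ) < ⌈|b| / |a|⌉₊ := by exact_mod_cast Nat.ceil_pos.2 hba
  refine ⟨|b| / ⌈|b| / |a|⌉₊, ⌈|b| / |a|⌉₊, div_pos (abs_pos.2 hb) hN, ?_, ?_, ?_⟩
  · rw [div_le_iff₀ hN, ← div_le_iff₀' (abs_pos.2 ha)]
    exact Nat.le_ceil _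
  · exact div_le_self (abs_nonneg b) (by exact_mod_cast Nat.ceil_pos.2 hba)
  · field_simp

lemma IsPgamma.spectrum_subset {n : ℕ} {p : ℤ × ℤ → Matrix (Fin n) (Fin n) ℂ}
    (hodd : ∀ β : ℤ × ℤ, Odd β.1 → Odd β.2 → p β = 0) {a b : ℝ} (ha : a ≠ 0) (hb : b ≠ 0)
    {m : ℤ} (hab : b - a = 2 * Real.pi * m) {Pa Pb : L2Rn n →L[ℂ] L2Rn n}
    (hPa : IsPgamma n p a Pa) (hPb : IsPgamma n p b Pb) : spectrum ℂ Pb ⊆ spectrum ℂ Pa := by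
  obtain ⟨δ, N, hδ, hδa, hδb, hNδ⟩ := exists_window_length ha hb
  have hba : a - b = 2 * Real.pi * (-m : ℤ) := by push_cast; linarith
  refine spectrum_subset_of_sum_mul_intertwining (Finset.range N)
    (fun j => transplantL (j * δ) δ a b hδa hδb) (fun j => transplantL (j * δ) δ b a hδb hδa)
    (fun j _ => hPa.comp_transplantL hodd hPb hab hδa hδb)
    (fun j _ => hPb.comp_transplantL hodd hPa hba hδb hδa) ?_
  simp only [ContinuousLinearMap.mul_def, transplantL_comp_transplantL]
  exact sum_transplantL_self hb hNδ hδ hδb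

theorem stmt2_general (n : ℕ)
    (p : ℤ × ℤ → Matrix (Fin n) (Fin n) ℂ)
    (hodd : ∀ β : ℤ × ℤ, Odd β.1 → Odd β.2 → p β = 0)
    (γ : ℝ) (hγ : γ ≠ 0) (hγ' : γ + 2 * Real.pi ≠ 0)
    (P P' : L2Rn n →L[ℂ] L2Rn n)
    (hP : IsPgamma n p γ P) (hP' : IsPgamma n p (γ + 2 * Real.pi) P') :
    spectrum ℂ P' = spectrum ℂ P :=
  (hP.spectrum_subset hodd hγ hγ' (m := 1) (by push_cast; ring) hP').antisymm
    (hP'.spectrum_subset hodd hγ' hγ (m := -1) (by push_cast; ring) hP)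

theorem stmt2 (n : ℕ) (hn : 1 ≤ n)
    (p : ℤ × ℤ → Matrix (Fin n) (Fin n) ℂ)
    (hdecay : ∀ N : ℕ, ∃ C : ℝ, 0 < C ∧ ∀ β : ℤ × ℤ,
      ‖p β‖ ≤ C / ((1 + |β.1| + |β.2| : ℤ) : ℝ) ^ N)
    (hsym : ∀ β : ℤ × ℤ, p (-β) = (p β)ᴴ)
    (hodd : ∀ β : ℤ × ℤ, Odd β.1 → Odd β.2 → p β = 0)
    (γ : ℝ) (hγ : γ ≠ 0) (hγ' : γ + 2 * Real.pi ≠ 0)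
    (P P' : L2Rn n →L[ℂ] L2Rn n)
    (hP : IsPgamma n p γ P) (hP' : IsPgamma n p (γ + 2 * Real.pi) P') :
    spectrum ℂ P' = spectrum ℂ P :=
  stmt2_general n p hodd γ hγ hγ' P P' hP hP'

end
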